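/- arXiv:1910.05762 — 5 statements merged into one kernel-verified Lean document; each statement's English description precedes it below -/
import Mathlib

section
/- In the lattice ℤ^{1+(n+2)} (n ≥ 4) with basis l, E_1, …, E_{n+2} and the standard hyperbolic form, define for each 5 ≤ i ≤ n+2 the element w_i = r_{l-E_1-E_3-E_i} ∘ r_{l-E_2-E_4-E_i}. Then for all 5 ≤ i, j ≤ n+2, w_i and w_j commute, and the composition w_5 ∘ w_6 ∘ ⋯ ∘ w_{n+2} is an involution (has order dividing 2). -/
/-- The hyperbolic form on `ℤ^{1,m}`, realized on vectors `ℕ → ℤ` supported on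
coordinates `0, 1, …, m`: coordinate `0` is the class `l`, and coordinate `i`
(`1 ≤ i ≤ m`) is the class `E_i`.  It satisfies `⟨l,l⟩ = 1`, `⟨E_i,E_j⟩ = -δ_{ij}`,
`⟨l,E_i⟩ = 0`. -/
def hypForm (m : ℕ) (x y : ℕ → ℤ) : ℤ :=
  2 * x 0 * y 0 - ∑ i ∈ Finset.range (m + 1), x i * y i

/-- The class `l` (pullback of a line). -/
def lcl : ℕ → ℤ := Pi.single 0 1

/-- The exceptional class `E_k`. -/
def Ecl (k : ℕ) : ℕ → ℤ := Pi.single k 1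

/-- The reflection `r_α (β) = β + ⟨α,β⟩ α` with respect to `α` in `ℤ^{1,m}`. -/
def reflct (m : ℕ) (α β : ℕ → ℤ) : ℕ → ℤ := β + hypForm m α β • α

/-!
Write `aᵢ = l - E₁ - E₃ - Eᵢ` and `bᵢ = l - E₂ - E₄ - Eᵢ`. Since `⟨aᵢ, bᵢ⟩ = 0`, the reflections
`r_{aᵢ}` and `r_{bᵢ}` are commuting involutions, so `wᵢ` is an involution. For `i ≠ j` the Gram
matrix of `(aᵢ, bᵢ)` against `(aⱼ, bⱼ)` is `[[-1, 1], [1, -1]]` and `aᵢ - bᵢ = E₂ + E₄ - E₁ - E₃`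
does not depend on `i`; this makes `wᵢ ∘ wⱼ` symmetric in `i` and `j`. A composite of pairwise
commuting involutions is an involution.
-/

open LinearMap (BilinForm)

namespace Function

variable {α ι : Type*}

theorem Involutive.comp_of_commute {f g : α → α} (hf : Involutive f) (hg : Involutive g)
    (hfg : Function.Commute f g) : Involutive (f ∘ g) := fun x => by
  simp only [comp_apply]
  rw [← hfg (g x), hg x, hf x]

theorem Commute.foldr_comp {g : α → α} {f : ι → α → α} {L : List ι}
    (h : ∀ i ∈ L, Function.Commute g (f i)) :
    Function.Commute g (L.foldr (fun i h => f i ∘ h) id) := by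
  induction L with
  | nil => exact Commute.id_right
  | cons a L ih =>
    exact (h a List.mem_cons_self).comp_right (ih fun i hi => h i (List.mem_cons_of_mem a hi))

theorem Involutive.foldr_comp {f : ι → α → α} {L : List ι}
    (hcomm : ∀ i ∈ L, ∀ j ∈ L, Function.Commute (f i) (f j)) (hinv : ∀ i ∈ L, Involutive (f i)) :
    Involutive (L.foldr (fun i g => f i ∘ g) id) := by
  induction L with
  | nil => exact fun _ => rfl
  | cons a L ih =>
    have hmem {i} := @List.mem_cons_of_mem _ a i L
    exact (hinv a List.mem_cons_self).comp_of_commute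
      (ih (fun i hi j hj => hcomm i (hmem hi) j (hmem hj)) fun i hi => hinv i (hmem hi))
      (Commute.foldr_comp fun j hj => hcomm a List.mem_cons_self j (hmem hj))

end Function

namespace LinearMap.BilinForm

variable {R M : Type*} [CommRing R] [AddCommGroup M] [Module R M]

def reflection (B : BilinForm R M) (α x : M) : M := x + B α x • α

variable {B : BilinForm R M}

theorem reflection_involutive {α : M} (hα : B α α = -2) : Function.Involutive (B.reflection α) :=
  fun x => by
    simp only [reflection, map_add, map_smul, hα, smul_eq_mul]
    module

theorem reflection_reflection_of_orthogonal {α β : M} (h : B α β = 0) (x : M) :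
    B.reflection α (B.reflection β x) = x + B α x • α + B β x • β := by
  simp only [reflection, map_add, map_smul, h, smul_eq_mul, mul_zero, add_zero]
  module

variable (hB : B.IsSymm)
include hB

theorem reflection_commute_of_orthogonal {α β : M} (h : B α β = 0) :
    Function.Commute (B.reflection α) (B.reflection β) := fun x => by
  rw [reflection_reflection_of_orthogonal h, reflection_reflection_of_orthogonal (hB.eq α β ▸ h)]
  abel

/-- Both composites equal `x ↦ x + ⟨a,x⟩a + ⟨b,x⟩b + ⟨a',x⟩a' + ⟨b',x⟩b' - t⟨a-b,x⟩(a-b)`,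
which is symmetric in the two pairs because `a - b = a' - b'`. -/
theorem reflection_comp_reflection_commute {a b a' b' : M} (t : R) (hab : B a b = 0)
    (hab' : B a' b' = 0) (hd : a - b = a' - b') (haa : B a a' = -t) (hbb : B b b' = -t)
    (hba : B a b' = t) (hba' : B b a' = t) :
    Function.Commute (B.reflection a ∘ B.reflection b) (B.reflection a' ∘ B.reflection b') :=
  fun x => by
    simp only [Function.comp_apply, reflection_reflection_of_orthogonal hab,
      reflection_reflection_of_orthogonal hab', map_add, map_smul, smul_eq_mul,
      hB.eq a' a, hB.eq b' b, hB.eq a' b, hB.eq b' a, haa, hbb, hba, hba']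
    have hD : B a x - B b x = B a' x - B b' x := by
      rw [← LinearMap.sub_apply, ← map_sub, hd, map_sub, LinearMap.sub_apply]
    linear_combination (norm := module) (t * (B b' x - B a' x)) • hd + hD • (t • (a' - b'))

end LinearMap.BilinForm

open LinearMap.BilinForm

def hypBilin (m : ℕ) : BilinForm ℤ (ℕ → ℤ) :=
  LinearMap.mk₂ ℤ (hypForm m)
    (fun x x' y => by simp only [hypForm, Pi.add_apply, add_mul, Finset.sum_add_distrib]; ring)
    (fun c x y => by
      simp only [hypForm, Pi.smul_apply, smul_eq_mul, mul_assoc, ← Finset.mul_sum]; ring)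
    (fun x y y' => by simp only [hypForm, Pi.add_apply, mul_add, Finset.sum_add_distrib]; ring)
    (fun c x y => by
      simp only [hypForm, Pi.smul_apply, smul_eq_mul, mul_left_comm _ c, ← Finset.mul_sum]; ring)

theorem hypBilin_isSymm (m : ℕ) : (hypBilin m).IsSymm :=
  ⟨fun x y => by simp only [hypBilin, LinearMap.mk₂_apply, hypForm, mul_comm (x _)]; ring⟩

theorem hypBilin_lcl (m : ℕ) (y : ℕ → ℤ) : hypBilin m lcl y = y 0 := by
  simp [hypBilin, hypForm, lcl, Pi.single_apply, two_mul]

theorem hypBilin_Ecl {m k : ℕ} (hk : 1 ≤ k) (hkm : k ≤ m) (y : ℕ → ℤ) :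
    hypBilin m (Ecl k) y = -y k := by
  simp [hypBilin, hypForm, Ecl, Pi.single_apply, show k ≠ 0 by omega, show k < m + 1 by omega]

theorem hypBilin_root {m a b c : ℕ} (ha : 1 ≤ a) (hb : 1 ≤ b) (hc : 1 ≤ c) (ham : a ≤ m)
    (hbm : b ≤ m) (hcm : c ≤ m) (y : ℕ → ℤ) :
    hypBilin m (lcl - Ecl a - Ecl b - Ecl c) y = y 0 + y a + y b + y c := by
  simp only [map_sub, LinearMap.sub_apply, hypBilin_lcl, hypBilin_Ecl ha ham, hypBilin_Ecl hb hbm,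
    hypBilin_Ecl hc hcm]
  ring

def rootA (i : ℕ) : ℕ → ℤ := lcl - Ecl 1 - Ecl 3 - Ecl i

def rootB (i : ℕ) : ℕ → ℤ := lcl - Ecl 2 - Ecl 4 - Ecl i

theorem rootA_sub_rootB (i : ℕ) : rootA i - rootB i = Ecl 2 + Ecl 4 - Ecl 1 - Ecl 3 := by
  simp only [rootA, rootB]
  abel

section
variable {m i j : ℕ} (hi : 5 ≤ i) (him : i ≤ m) (hj : 5 ≤ j)
include hi him hj

theorem hypBilin_rootA_rootA : hypBilin m (rootA i) (rootA j) = if i = j then -2 else -1 := by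
  rw [rootA, hypBilin_root (by omega) (by omega) (by omega) (by omega) (by omega) him]
  split_ifs <;> simp (disch := omega) [rootA, lcl, Ecl, *]

theorem hypBilin_rootB_rootB : hypBilin m (rootB i) (rootB j) = if i = j then -2 else -1 := by
  rw [rootB, hypBilin_root (by omega) (by omega) (by omega) (by omega) (by omega) him]
  split_ifs <;> simp (disch := omega) [rootB, lcl, Ecl, *]

theorem hypBilin_rootA_rootB : hypBilin m (rootA i) (rootB j) = if i = j then 0 else 1 := by
  rw [rootA, hypBilin_root (by omega) (by omega) (by omega) (by omega) (by omega) him]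
  split_ifs <;> simp (disch := omega) [rootB, lcl, Ecl, *]

end

def wD (m i : ℕ) : (ℕ → ℤ) → ℕ → ℤ := reflct m (rootA i) ∘ reflct m (rootB i)

theorem wD_eq (m i : ℕ) :
    wD m i = (hypBilin m).reflection (rootA i) ∘ (hypBilin m).reflection (rootB i) :=
  rfl

section
variable {m i j : ℕ} (hi : 5 ≤ i) (him : i ≤ m)
include hi him

theorem wD_involutive : Function.Involutive (wD m i) := by
  have hab := hypBilin_rootA_rootB hi him hi
  have haa := hypBilin_rootA_rootA hi him hi
  have hbb := hypBilin_rootB_rootB hi him hi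
  simp only [if_true] at hab haa hbb
  rw [wD_eq]
  exact (reflection_involutive haa).comp_of_commute (reflection_involutive hbb)
    (reflection_commute_of_orthogonal (hypBilin_isSymm m) hab)

theorem wD_commute (hj : 5 ≤ j) (hjm : j ≤ m) : Function.Commute (wD m i) (wD m j) := by
  obtain rfl | hij := eq_or_ne i j
  · rfl
  rw [wD_eq, wD_eq]
  refine reflection_comp_reflection_commute (hypBilin_isSymm m) 1 ?_ ?_ ?_ ?_ ?_ ?_ ?_
  · simpa using hypBilin_rootA_rootB hi him hi
  · simpa using hypBilin_rootA_rootB hj hjm hj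
  · rw [rootA_sub_rootB, rootA_sub_rootB]
  · simpa [hij] using hypBilin_rootA_rootA hi him hj
  · simpa [hij] using hypBilin_rootB_rootB hi him hj
  · simpa [hij] using hypBilin_rootA_rootB hi him hj
  · rw [(hypBilin_isSymm m).eq]
    simpa [hij.symm] using hypBilin_rootA_rootB hj hjm hi

end

theorem wD_commute_and_involution_general (n : ℕ) :
    let w : ℕ → (ℕ → ℤ) → (ℕ → ℤ) := fun i =>
      reflct (n + 2) (lcl - Ecl 1 - Ecl 3 - Ecl i) ∘
        reflct (n + 2) (lcl - Ecl 2 - Ecl 4 - Ecl i)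
    (∀ i j : ℕ, 5 ≤ i → i ≤ n + 2 → 5 ≤ j → j ≤ n + 2 → w i ∘ w j = w j ∘ w i) ∧
    (((List.range (n - 2)).map (fun t => t + 5)).foldr (fun i f => w i ∘ f) id) ∘
      (((List.range (n - 2)).map (fun t => t + 5)).foldr (fun i f => w i ∘ f) id) = id := by
  intro w
  have hrange : ∀ i ∈ (List.range (n - 2)).map (fun t => t + 5), 5 ≤ i ∧ i ≤ n + 2 := by
    simp only [List.mem_map, List.mem_range]
    omega
  refine ⟨fun i j hi hin hj hjn => (wD_commute hi hin hj hjn).comp_eq, ?_⟩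
  refine Function.Involutive.comp_self (Function.Involutive.foldr_comp (f := wD (n + 2)) ?_ ?_)
  · exact fun i hi j hj =>
      wD_commute (hrange i hi).1 (hrange i hi).2 (hrange j hj).1 (hrange j hj).2
  · exact fun i hi => wD_involutive (hrange i hi).1 (hrange i hi).2

/-- In `ℤ^{1,n+2}` (`n ≥ 4`), for `5 ≤ i ≤ n+2` set
`w_i = r_{l-E₁-E₃-E_i} ∘ r_{l-E₂-E₄-E_i}`.  Then all the `w_i` pairwise commute, and the
composition `w₅ ∘ w₆ ∘ ⋯ ∘ w_{n+2}` is an involution. -/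
theorem wD_commute_and_involution (n : ℕ) (hn : 4 ≤ n) :
    let w : ℕ → (ℕ → ℤ) → (ℕ → ℤ) := fun i =>
      reflct (n + 2) (lcl - Ecl 1 - Ecl 3 - Ecl i) ∘
        reflct (n + 2) (lcl - Ecl 2 - Ecl 4 - Ecl i)
    (∀ i j : ℕ, 5 ≤ i → i ≤ n + 2 → 5 ≤ j → j ≤ n + 2 → w i ∘ w j = w j ∘ w i) ∧
    (((List.range (n - 2)).map (fun t => t + 5)).foldr (fun i f => w i ∘ f) id) ∘
      (((List.range (n - 2)).map (fun t => t + 5)).foldr (fun i f => w i ∘ f) id) = id :=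
  wD_commute_and_involution_general n
end

section
/- In the lattice ℤ^{1,9} with basis l, E_1, …, E_9 and the standard hyperbolic form, the six elements α₁ = 2l-E_1-E_2-E_3-E_4-E_6-E_7, α₂ = 2l-E_1-E_2-E_3-E_5-E_6-E_8, α₃ = 2l-E_1-E_2-E_4-E_5-E_6-E_9, α₄ = 2l-E_1-E_2-E_3-E_4-E_8-E_9, α₅ = 2l-E_1-E_2-E_3-E_5-E_7-E_9, α₆ = 2l-E_1-E_2-E_4-E_5-E_7-E_8 are roots and pairwise orthogonal, so the reflections r_{α_i} (1 ≤ i ≤ 6) pairwise commute. -/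
set_option maxHeartbeats 1000000

lemma hypForm_add_smul (m : ℕ) (α β γ : ℕ → ℤ) (c : ℤ) :
    hypForm m α (β + c • γ) = hypForm m α β + c * hypForm m α γ := by
  simp only [hypForm, Pi.add_apply, Pi.smul_apply, smul_eq_mul]
  rw [show (∑ i ∈ Finset.range (m+1), α i * (β i + c * γ i))
      = (∑ i ∈ Finset.range (m+1), α i * β i) + c * ∑ i ∈ Finset.range (m+1), α i * γ i by
    rw [Finset.mul_sum, ← Finset.sum_add_distrib]; apply Finset.sum_congr rfl; intros; ring]
  ring

lemma reflct_comm (m : ℕ) (α α' : ℕ → ℤ) (h : hypForm m α α' = 0) (h' : hypForm m α' α = 0) :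
    reflct m α ∘ reflct m α' = reflct m α' ∘ reflct m α := by
  funext β
  simp only [Function.comp_apply, reflct, hypForm_add_smul, h, h', mul_zero, add_zero]
  module

/-- In `ℤ^{1,9}`, the six listed elements `α₁, …, α₆` are pairwise orthogonal roots,
so the corresponding reflections pairwise commute. -/
theorem E7_six_roots :
    let a : Fin 6 → (ℕ → ℤ) :=
      ![(2 : ℤ) • lcl - Ecl 1 - Ecl 2 - Ecl 3 - Ecl 4 - Ecl 6 - Ecl 7,
        (2 : ℤ) • lcl - Ecl 1 - Ecl 2 - Ecl 3 - Ecl 5 - Ecl 6 - Ecl 8,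
        (2 : ℤ) • lcl - Ecl 1 - Ecl 2 - Ecl 4 - Ecl 5 - Ecl 6 - Ecl 9,
        (2 : ℤ) • lcl - Ecl 1 - Ecl 2 - Ecl 3 - Ecl 4 - Ecl 8 - Ecl 9,
        (2 : ℤ) • lcl - Ecl 1 - Ecl 2 - Ecl 3 - Ecl 5 - Ecl 7 - Ecl 9,
        (2 : ℤ) • lcl - Ecl 1 - Ecl 2 - Ecl 4 - Ecl 5 - Ecl 7 - Ecl 8]
    (∀ t : Fin 6, hypForm 9 (a t) (a t) = -2) ∧
    (∀ s t : Fin 6, s ≠ t → hypForm 9 (a s) (a t) = 0) ∧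
    (∀ s t : Fin 6, reflct 9 (a s) ∘ reflct 9 (a t) = reflct 9 (a t) ∘ reflct 9 (a s)) := by
  intro a
  have horth : ∀ s t : Fin 6, s ≠ t → hypForm 9 (a s) (a t) = 0 := by
    intro s t hst
    fin_cases s <;> fin_cases t
    · exact absurd rfl hst
    · clear hst
      show hypForm 9 ((2 : ℤ) • lcl - Ecl 1 - Ecl 2 - Ecl 3 - Ecl 4 - Ecl 6 - Ecl 7)
          ((2 : ℤ) • lcl - Ecl 1 - Ecl 2 - Ecl 3 - Ecl 5 - Ecl 6 - Ecl 8) = 0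
      simp [hypForm, lcl, Ecl, Finset.sum_range_succ, Pi.single_apply]
    · clear hst
      show hypForm 9 ((2 : ℤ) • lcl - Ecl 1 - Ecl 2 - Ecl 3 - Ecl 4 - Ecl 6 - Ecl 7)
          ((2 : ℤ) • lcl - Ecl 1 - Ecl 2 - Ecl 4 - Ecl 5 - Ecl 6 - Ecl 9) = 0
      simp [hypForm, lcl, Ecl, Finset.sum_range_succ, Pi.single_apply]
    · clear hst
      show hypForm 9 ((2 : ℤ) • lcl - Ecl 1 - Ecl 2 - Ecl 3 - Ecl 4 - Ecl 6 - Ecl 7)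
          ((2 : ℤ) • lcl - Ecl 1 - Ecl 2 - Ecl 3 - Ecl 4 - Ecl 8 - Ecl 9) = 0
      simp [hypForm, lcl, Ecl, Finset.sum_range_succ, Pi.single_apply]
    · clear hst
      show hypForm 9 ((2 : ℤ) • lcl - Ecl 1 - Ecl 2 - Ecl 3 - Ecl 4 - Ecl 6 - Ecl 7)
          ((2 : ℤ) • lcl - Ecl 1 - Ecl 2 - Ecl 3 - Ecl 5 - Ecl 7 - Ecl 9) = 0
      simp [hypForm, lcl, Ecl, Finset.sum_range_succ, Pi.single_apply]
    · clear hst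
      show hypForm 9 ((2 : ℤ) • lcl - Ecl 1 - Ecl 2 - Ecl 3 - Ecl 4 - Ecl 6 - Ecl 7)
          ((2 : ℤ) • lcl - Ecl 1 - Ecl 2 - Ecl 4 - Ecl 5 - Ecl 7 - Ecl 8) = 0
      simp [hypForm, lcl, Ecl, Finset.sum_range_succ, Pi.single_apply]
    · clear hst
      show hypForm 9 ((2 : ℤ) • lcl - Ecl 1 - Ecl 2 - Ecl 3 - Ecl 5 - Ecl 6 - Ecl 8)
          ((2 : ℤ) • lcl - Ecl 1 - Ecl 2 - Ecl 3 - Ecl 4 - Ecl 6 - Ecl 7) = 0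
      simp [hypForm, lcl, Ecl, Finset.sum_range_succ, Pi.single_apply]
    · exact absurd rfl hst
    · clear hst
      show hypForm 9 ((2 : ℤ) • lcl - Ecl 1 - Ecl 2 - Ecl 3 - Ecl 5 - Ecl 6 - Ecl 8)
          ((2 : ℤ) • lcl - Ecl 1 - Ecl 2 - Ecl 4 - Ecl 5 - Ecl 6 - Ecl 9) = 0
      simp [hypForm, lcl, Ecl, Finset.sum_range_succ, Pi.single_apply]
    · clear hst
      show hypForm 9 ((2 : ℤ) • lcl - Ecl 1 - Ecl 2 - Ecl 3 - Ecl 5 - Ecl 6 - Ecl 8)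
          ((2 : ℤ) • lcl - Ecl 1 - Ecl 2 - Ecl 3 - Ecl 4 - Ecl 8 - Ecl 9) = 0
      simp [hypForm, lcl, Ecl, Finset.sum_range_succ, Pi.single_apply]
    · clear hst
      show hypForm 9 ((2 : ℤ) • lcl - Ecl 1 - Ecl 2 - Ecl 3 - Ecl 5 - Ecl 6 - Ecl 8)
          ((2 : ℤ) • lcl - Ecl 1 - Ecl 2 - Ecl 3 - Ecl 5 - Ecl 7 - Ecl 9) = 0
      simp [hypForm, lcl, Ecl, Finset.sum_range_succ, Pi.single_apply]
    · clear hst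
      show hypForm 9 ((2 : ℤ) • lcl - Ecl 1 - Ecl 2 - Ecl 3 - Ecl 5 - Ecl 6 - Ecl 8)
          ((2 : ℤ) • lcl - Ecl 1 - Ecl 2 - Ecl 4 - Ecl 5 - Ecl 7 - Ecl 8) = 0
      simp [hypForm, lcl, Ecl, Finset.sum_range_succ, Pi.single_apply]
    · clear hst
      show hypForm 9 ((2 : ℤ) • lcl - Ecl 1 - Ecl 2 - Ecl 4 - Ecl 5 - Ecl 6 - Ecl 9)
          ((2 : ℤ) • lcl - Ecl 1 - Ecl 2 - Ecl 3 - Ecl 4 - Ecl 6 - Ecl 7) = 0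
      simp [hypForm, lcl, Ecl, Finset.sum_range_succ, Pi.single_apply]
    · clear hst
      show hypForm 9 ((2 : ℤ) • lcl - Ecl 1 - Ecl 2 - Ecl 4 - Ecl 5 - Ecl 6 - Ecl 9)
          ((2 : ℤ) • lcl - Ecl 1 - Ecl 2 - Ecl 3 - Ecl 5 - Ecl 6 - Ecl 8) = 0
      simp [hypForm, lcl, Ecl, Finset.sum_range_succ, Pi.single_apply]
    · exact absurd rfl hst
    · clear hst
      show hypForm 9 ((2 : ℤ) • lcl - Ecl 1 - Ecl 2 - Ecl 4 - Ecl 5 - Ecl 6 - Ecl 9)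
          ((2 : ℤ) • lcl - Ecl 1 - Ecl 2 - Ecl 3 - Ecl 4 - Ecl 8 - Ecl 9) = 0
      simp [hypForm, lcl, Ecl, Finset.sum_range_succ, Pi.single_apply]
    · clear hst
      show hypForm 9 ((2 : ℤ) • lcl - Ecl 1 - Ecl 2 - Ecl 4 - Ecl 5 - Ecl 6 - Ecl 9)
          ((2 : ℤ) • lcl - Ecl 1 - Ecl 2 - Ecl 3 - Ecl 5 - Ecl 7 - Ecl 9) = 0
      simp [hypForm, lcl, Ecl, Finset.sum_range_succ, Pi.single_apply]
    · clear hst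
      show hypForm 9 ((2 : ℤ) • lcl - Ecl 1 - Ecl 2 - Ecl 4 - Ecl 5 - Ecl 6 - Ecl 9)
          ((2 : ℤ) • lcl - Ecl 1 - Ecl 2 - Ecl 4 - Ecl 5 - Ecl 7 - Ecl 8) = 0
      simp [hypForm, lcl, Ecl, Finset.sum_range_succ, Pi.single_apply]
    · clear hst
      show hypForm 9 ((2 : ℤ) • lcl - Ecl 1 - Ecl 2 - Ecl 3 - Ecl 4 - Ecl 8 - Ecl 9)
          ((2 : ℤ) • lcl - Ecl 1 - Ecl 2 - Ecl 3 - Ecl 4 - Ecl 6 - Ecl 7) = 0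
      simp [hypForm, lcl, Ecl, Finset.sum_range_succ, Pi.single_apply]
    · clear hst
      show hypForm 9 ((2 : ℤ) • lcl - Ecl 1 - Ecl 2 - Ecl 3 - Ecl 4 - Ecl 8 - Ecl 9)
          ((2 : ℤ) • lcl - Ecl 1 - Ecl 2 - Ecl 3 - Ecl 5 - Ecl 6 - Ecl 8) = 0
      simp [hypForm, lcl, Ecl, Finset.sum_range_succ, Pi.single_apply]
    · clear hst
      show hypForm 9 ((2 : ℤ) • lcl - Ecl 1 - Ecl 2 - Ecl 3 - Ecl 4 - Ecl 8 - Ecl 9)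
          ((2 : ℤ) • lcl - Ecl 1 - Ecl 2 - Ecl 4 - Ecl 5 - Ecl 6 - Ecl 9) = 0
      simp [hypForm, lcl, Ecl, Finset.sum_range_succ, Pi.single_apply]
    · exact absurd rfl hst
    · clear hst
      show hypForm 9 ((2 : ℤ) • lcl - Ecl 1 - Ecl 2 - Ecl 3 - Ecl 4 - Ecl 8 - Ecl 9)
          ((2 : ℤ) • lcl - Ecl 1 - Ecl 2 - Ecl 3 - Ecl 5 - Ecl 7 - Ecl 9) = 0
      simp [hypForm, lcl, Ecl, Finset.sum_range_succ, Pi.single_apply]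
    · clear hst
      show hypForm 9 ((2 : ℤ) • lcl - Ecl 1 - Ecl 2 - Ecl 3 - Ecl 4 - Ecl 8 - Ecl 9)
          ((2 : ℤ) • lcl - Ecl 1 - Ecl 2 - Ecl 4 - Ecl 5 - Ecl 7 - Ecl 8) = 0
      simp [hypForm, lcl, Ecl, Finset.sum_range_succ, Pi.single_apply]
    · clear hst
      show hypForm 9 ((2 : ℤ) • lcl - Ecl 1 - Ecl 2 - Ecl 3 - Ecl 5 - Ecl 7 - Ecl 9)
          ((2 : ℤ) • lcl - Ecl 1 - Ecl 2 - Ecl 3 - Ecl 4 - Ecl 6 - Ecl 7) = 0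
      simp [hypForm, lcl, Ecl, Finset.sum_range_succ, Pi.single_apply]
    · clear hst
      show hypForm 9 ((2 : ℤ) • lcl - Ecl 1 - Ecl 2 - Ecl 3 - Ecl 5 - Ecl 7 - Ecl 9)
          ((2 : ℤ) • lcl - Ecl 1 - Ecl 2 - Ecl 3 - Ecl 5 - Ecl 6 - Ecl 8) = 0
      simp [hypForm, lcl, Ecl, Finset.sum_range_succ, Pi.single_apply]
    · clear hst
      show hypForm 9 ((2 : ℤ) • lcl - Ecl 1 - Ecl 2 - Ecl 3 - Ecl 5 - Ecl 7 - Ecl 9)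
          ((2 : ℤ) • lcl - Ecl 1 - Ecl 2 - Ecl 4 - Ecl 5 - Ecl 6 - Ecl 9) = 0
      simp [hypForm, lcl, Ecl, Finset.sum_range_succ, Pi.single_apply]
    · clear hst
      show hypForm 9 ((2 : ℤ) • lcl - Ecl 1 - Ecl 2 - Ecl 3 - Ecl 5 - Ecl 7 - Ecl 9)
          ((2 : ℤ) • lcl - Ecl 1 - Ecl 2 - Ecl 3 - Ecl 4 - Ecl 8 - Ecl 9) = 0
      simp [hypForm, lcl, Ecl, Finset.sum_range_succ, Pi.single_apply]
    · exact absurd rfl hst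
    · clear hst
      show hypForm 9 ((2 : ℤ) • lcl - Ecl 1 - Ecl 2 - Ecl 3 - Ecl 5 - Ecl 7 - Ecl 9)
          ((2 : ℤ) • lcl - Ecl 1 - Ecl 2 - Ecl 4 - Ecl 5 - Ecl 7 - Ecl 8) = 0
      simp [hypForm, lcl, Ecl, Finset.sum_range_succ, Pi.single_apply]
    · clear hst
      show hypForm 9 ((2 : ℤ) • lcl - Ecl 1 - Ecl 2 - Ecl 4 - Ecl 5 - Ecl 7 - Ecl 8)
          ((2 : ℤ) • lcl - Ecl 1 - Ecl 2 - Ecl 3 - Ecl 4 - Ecl 6 - Ecl 7) = 0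
      simp [hypForm, lcl, Ecl, Finset.sum_range_succ, Pi.single_apply]
    · clear hst
      show hypForm 9 ((2 : ℤ) • lcl - Ecl 1 - Ecl 2 - Ecl 4 - Ecl 5 - Ecl 7 - Ecl 8)
          ((2 : ℤ) • lcl - Ecl 1 - Ecl 2 - Ecl 3 - Ecl 5 - Ecl 6 - Ecl 8) = 0
      simp [hypForm, lcl, Ecl, Finset.sum_range_succ, Pi.single_apply]
    · clear hst
      show hypForm 9 ((2 : ℤ) • lcl - Ecl 1 - Ecl 2 - Ecl 4 - Ecl 5 - Ecl 7 - Ecl 8)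
          ((2 : ℤ) • lcl - Ecl 1 - Ecl 2 - Ecl 4 - Ecl 5 - Ecl 6 - Ecl 9) = 0
      simp [hypForm, lcl, Ecl, Finset.sum_range_succ, Pi.single_apply]
    · clear hst
      show hypForm 9 ((2 : ℤ) • lcl - Ecl 1 - Ecl 2 - Ecl 4 - Ecl 5 - Ecl 7 - Ecl 8)
          ((2 : ℤ) • lcl - Ecl 1 - Ecl 2 - Ecl 3 - Ecl 4 - Ecl 8 - Ecl 9) = 0
      simp [hypForm, lcl, Ecl, Finset.sum_range_succ, Pi.single_apply]
    · clear hst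
      show hypForm 9 ((2 : ℤ) • lcl - Ecl 1 - Ecl 2 - Ecl 4 - Ecl 5 - Ecl 7 - Ecl 8)
          ((2 : ℤ) • lcl - Ecl 1 - Ecl 2 - Ecl 3 - Ecl 5 - Ecl 7 - Ecl 9) = 0
      simp [hypForm, lcl, Ecl, Finset.sum_range_succ, Pi.single_apply]
    · exact absurd rfl hst
  refine ⟨?_, horth, ?_⟩
  · intro t
    fin_cases t
    · show hypForm 9 ((2 : ℤ) • lcl - Ecl 1 - Ecl 2 - Ecl 3 - Ecl 4 - Ecl 6 - Ecl 7)
          ((2 : ℤ) • lcl - Ecl 1 - Ecl 2 - Ecl 3 - Ecl 4 - Ecl 6 - Ecl 7) = -2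
      simp [hypForm, lcl, Ecl, Finset.sum_range_succ, Pi.single_apply]
    · show hypForm 9 ((2 : ℤ) • lcl - Ecl 1 - Ecl 2 - Ecl 3 - Ecl 5 - Ecl 6 - Ecl 8)
          ((2 : ℤ) • lcl - Ecl 1 - Ecl 2 - Ecl 3 - Ecl 5 - Ecl 6 - Ecl 8) = -2
      simp [hypForm, lcl, Ecl, Finset.sum_range_succ, Pi.single_apply]
    · show hypForm 9 ((2 : ℤ) • lcl - Ecl 1 - Ecl 2 - Ecl 4 - Ecl 5 - Ecl 6 - Ecl 9)
          ((2 : ℤ) • lcl - Ecl 1 - Ecl 2 - Ecl 4 - Ecl 5 - Ecl 6 - Ecl 9) = -2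
      simp [hypForm, lcl, Ecl, Finset.sum_range_succ, Pi.single_apply]
    · show hypForm 9 ((2 : ℤ) • lcl - Ecl 1 - Ecl 2 - Ecl 3 - Ecl 4 - Ecl 8 - Ecl 9)
          ((2 : ℤ) • lcl - Ecl 1 - Ecl 2 - Ecl 3 - Ecl 4 - Ecl 8 - Ecl 9) = -2
      simp [hypForm, lcl, Ecl, Finset.sum_range_succ, Pi.single_apply]
    · show hypForm 9 ((2 : ℤ) • lcl - Ecl 1 - Ecl 2 - Ecl 3 - Ecl 5 - Ecl 7 - Ecl 9)
          ((2 : ℤ) • lcl - Ecl 1 - Ecl 2 - Ecl 3 - Ecl 5 - Ecl 7 - Ecl 9) = -2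
      simp [hypForm, lcl, Ecl, Finset.sum_range_succ, Pi.single_apply]
    · show hypForm 9 ((2 : ℤ) • lcl - Ecl 1 - Ecl 2 - Ecl 4 - Ecl 5 - Ecl 7 - Ecl 8)
          ((2 : ℤ) • lcl - Ecl 1 - Ecl 2 - Ecl 4 - Ecl 5 - Ecl 7 - Ecl 8) = -2
      simp [hypForm, lcl, Ecl, Finset.sum_range_succ, Pi.single_apply]
  · intro s t
    rcases eq_or_ne s t with rfl | h
    · rfl
    · exact reflct_comm 9 (a s) (a t) (horth s t h) (horth t s h.symm)
end

section
/- Let N be a free ℤ-module with basis (e_i)_{i ∈ I} equipped with a ℤ-valued skew-symmetric form {·,·}, and let Π be a group acting on the finite index set I such that {e_i, e_j} = {e_{π₁·i}, e_{π₂·j}} for all i, j ∈ I and π₁, π₂ ∈ Π. Fix k ∈ I and let e_i' = e_i + [{e_i, e_k}]_+ · Σ_{a ∈ Πk} e_a for i ∉ Πk, and e_i' = -e_i for i ∈ Πk (where [x]_+ = max(x,0) and Πk is the Π-orbit of k). Then the new basis (e_i')_{i ∈ I} again satisfies {e_{π₁·i}', e_{π₂·j}'} = {e_i', e_j'} for all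 i, j ∈ I and π₁, π₂ ∈ Π. -/
open scoped Classical in
/-- Folding symmetry is preserved by `Π`-constrained mutation.  Let `N = ℤ^I` with basis
`(e_i)` and skew-symmetric form determined by `b : I → I → ℤ`, extended bilinearly, and
let `Π ≤ Sym(I)` satisfy `{e_i,e_j} = {e_{π₁·i}, e_{π₂·j}}`.  Fix `k ∈ I` and set
`e_i' = -e_i` for `i` in the orbit `Πk`, and
`e_i' = e_i + [{e_i,e_k}]₊ · Σ_{a ∈ Πk} e_a` otherwise.  Then the new basis again
satisfies `{e_{π₁·i}', e_{π₂·j}'} = {e_i', e_j'}`. -/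
theorem folded_symmetry_preserved {I : Type*} [Fintype I] [DecidableEq I]
    (b : I → I → ℤ) (hskew : ∀ i j : I, b i j = -b j i)
    (P : Subgroup (Equiv.Perm I))
    (hfold : ∀ i j : I, ∀ π₁ ∈ P, ∀ π₂ ∈ P, b i j = b (π₁ i) (π₂ j)) (k : I) :
    let f : (I → ℤ) → (I → ℤ) → ℤ := fun x y => ∑ i, ∑ j, x i * b i j * y j
    let e : I → (I → ℤ) := fun i => Pi.single i 1
    let orb : Finset I := Finset.univ.filter fun a => ∃ π ∈ P, π k = a
    let e' : I → (I → ℤ) := fun i =>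
      if i ∈ orb then -(e i) else e i + max (b i k) 0 • ∑ a ∈ orb, e a
    ∀ i j : I, ∀ π₁ ∈ P, ∀ π₂ ∈ P, f (e' (π₁ i)) (e' (π₂ j)) = f (e' i) (e' j) := by
  intro f e orb e'
  -- basic properties of f
  have f_add_left : ∀ u v w : I → ℤ, f (u + v) w = f u w + f v w := by
    intro u v w
    simp [f, add_mul, Finset.sum_add_distrib]
  have f_add_right : ∀ u v w : I → ℤ, f u (v + w) = f u v + f u w := by
    intro u v w
    simp [f, mul_add, Finset.sum_add_distrib]
  have f_neg_left : ∀ u v : I → ℤ, f (-u) v = -f u v := by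
    intro u v
    simp [f, Finset.sum_neg_distrib]
  have f_neg_right : ∀ u v : I → ℤ, f u (-v) = -f u v := by
    intro u v
    simp [f, Finset.sum_neg_distrib]
  have f_smul_left : ∀ (c : ℤ) (u v : I → ℤ), f (c • u) v = c * f u v := by
    intro c u v
    simp [f, Finset.mul_sum, mul_assoc]
  have f_smul_right : ∀ (c : ℤ) (u v : I → ℤ), f u (c • v) = c * f u v := by
    intro c u v
    simp [f, Finset.mul_sum]
    ring_nf
    congr 1; ext x; congr 1; ext y; ring
  have f_sum_right : ∀ (u : I → ℤ) (s : Finset I) (v : I → I → ℤ),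
      f u (∑ a ∈ s, v a) = ∑ a ∈ s, f u (v a) := by
    intro u s v
    simp only [f, Finset.sum_apply, Finset.mul_sum]
    calc ∑ x, ∑ y, ∑ a ∈ s, u x * b x y * v a y
        = ∑ x, ∑ a ∈ s, ∑ y, u x * b x y * v a y :=
          Finset.sum_congr rfl fun x _ => Finset.sum_comm
      _ = ∑ a ∈ s, ∑ x, ∑ y, u x * b x y * v a y := Finset.sum_comm
  have f_sum_left : ∀ (s : Finset I) (v : I → I → ℤ) (u : I → ℤ),
      f (∑ a ∈ s, v a) u = ∑ a ∈ s, f (v a) u := by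
    intro s v u
    simp only [f, Finset.sum_apply, Finset.sum_mul]
    calc ∑ x, ∑ y, ∑ a ∈ s, v a x * b x y * u y
        = ∑ x, ∑ a ∈ s, ∑ y, v a x * b x y * u y :=
          Finset.sum_congr rfl fun x _ => Finset.sum_comm
      _ = ∑ a ∈ s, ∑ x, ∑ y, v a x * b x y * u y := Finset.sum_comm
  have f_single : ∀ p q : I, f (e p) (e q) = b p q := by
    intro p q
    simp [f, e, Pi.single_apply]
  -- orbit facts
  have horb : ∀ π ∈ P, ∀ x : I, π x ∈ orb ↔ x ∈ orb := by
    intro π hπ x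
    simp only [orb, Finset.mem_filter, Finset.mem_univ, true_and]
    constructor
    · rintro ⟨σ, hσ, h⟩
      exact ⟨π⁻¹ * σ, mul_mem (inv_mem hπ) hσ, by
        simp [Equiv.Perm.mul_apply, h]⟩
    · rintro ⟨σ, hσ, h⟩
      exact ⟨π * σ, mul_mem hπ hσ, by simp [Equiv.Perm.mul_apply, h]⟩
  have hbk : ∀ π ∈ P, ∀ i : I, b (π i) k = b i k := by
    intro π hπ i
    have := hfold i k π hπ 1 (one_mem P)
    simpa using this.symm
  have hkb : ∀ π ∈ P, ∀ j : I, b k (π j) = b k j := by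
    intro π hπ j
    have := hfold k j 1 (one_mem P) π hπ
    simpa using this.symm
  have hmemA : ∀ (i : I), ∀ a ∈ orb, b i a = b i k := by
    intro i a ha
    simp only [orb, Finset.mem_filter, Finset.mem_univ, true_and] at ha
    obtain ⟨σ, hσ, rfl⟩ := ha
    have := hfold i k 1 (one_mem P) σ hσ
    simpa using this.symm
  have hmemB : ∀ (j : I), ∀ a ∈ orb, b a j = b k j := by
    intro j a ha
    simp only [orb, Finset.mem_filter, Finset.mem_univ, true_and] at ha
    obtain ⟨σ, hσ, rfl⟩ := ha
    have := hfold k j σ hσ 1 (one_mem P)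
    simpa using this.symm
  have hkk : b k k = 0 := by have := hskew k k; omega
  have hpk0 : ∀ p ∈ orb, b p k = 0 := by
    intro p hp
    rw [hmemB k p hp, hkk]
  have hkq0 : ∀ q ∈ orb, b k q = 0 := by
    intro q hq
    rw [hmemA k q hq, hkk]
  have hsumR : ∀ p : I, ∑ a ∈ orb, b p a = (orb.card : ℤ) * b p k := by
    intro p
    rw [Finset.sum_congr rfl (hmemA p), Finset.sum_const, nsmul_eq_mul]
  have hsumL : ∀ q : I, ∑ a ∈ orb, b a q = (orb.card : ℤ) * b k q := by
    intro q
    rw [Finset.sum_congr rfl (fun a ha => hmemB q a ha), Finset.sum_const, nsmul_eq_mul]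
  have fS_right : ∀ p : I, f (e p) (∑ a ∈ orb, e a) = (orb.card : ℤ) * b p k := by
    intro p
    rw [f_sum_right]
    simp only [f_single]
    exact hsumR p
  have fS_left : ∀ q : I, f (∑ a ∈ orb, e a) (e q) = (orb.card : ℤ) * b k q := by
    intro q
    rw [f_sum_left]
    simp only [f_single]
    exact hsumL q
  have fSS : f (∑ a ∈ orb, e a) (∑ a ∈ orb, e a) = 0 := by
    rw [f_sum_right]
    refine Finset.sum_eq_zero fun a ha => ?_
    rw [fS_left, hkq0 a ha, mul_zero]
  have key : ∀ p q : I, f (e' p) (e' q) =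
      (if p ∈ orb then -1 else 1) * (if q ∈ orb then -1 else 1) * b p q
      + (if p ∈ orb then 0 else 1) * (if q ∈ orb then (0:ℤ) else max (b q k) 0) *
          ((orb.card : ℤ) * b p k)
      + (if p ∈ orb then (0:ℤ) else max (b p k) 0) * (if q ∈ orb then 0 else 1) *
          ((orb.card : ℤ) * b k q) := by
    intro p q
    by_cases hp : p ∈ orb <;> by_cases hq : q ∈ orb
    · simp only [e', if_pos hp, if_pos hq, f_neg_left, f_neg_right, f_single]
      ring
    · simp only [e', if_pos hp, if_neg hq, f_neg_left, f_add_right, f_smul_right, f_single,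
        fS_right]
      rw [hpk0 p hp]
      ring
    · simp only [e', if_neg hp, if_pos hq, f_neg_right, f_add_left, f_smul_left, f_single,
        fS_left]
      rw [hkq0 q hq]
      ring
    · simp only [e', if_neg hp, if_neg hq, f_add_left, f_add_right, f_smul_left, f_smul_right,
        f_single, fS_right, fS_left, fSS]
      ring
  intro i j π₁ h₁ π₂ h₂
  rw [key, key, ← hfold i j π₁ h₁ π₂ h₂, hbk π₁ h₁ i, hkb π₂ h₂ j, hbk π₂ h₂ j]
  simp only [horb π₁ h₁ i, horb π₂ h₂ j]
end

section
/- Let q : N → N̄ be the folding quotient, q* : M̄_ℝ → M_ℝ the dual embedding (M = N*, M̄ = N̄*), and fix k ∈ I. Define piecewise-linear maps T : M_ℝ → M_ℝ by T(m) = m + Σ_{k' ∈ Πk} ⟨e_{k'}, m⟩ {e_{k'}, ·} if ⟨e_{k'}, m⟩ ≥ 0 for all k' ∈ Πk, and T(m) = m if ⟨e_{k'}, m⟩ ≤ 0 for all k' ∈ Πk; and T̄ : M̄_ℝ → M̄_ℝ by T̄(m̄) = m̄ + ⟨d_{Πk} e_{Πk}, m̄⟩ {e_{Πk}, ·} if ⟨e_{Πk},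 m̄⟩ ≥ 0, T̄(m̄) = m̄ if ⟨e_{Πk}, m̄⟩ ≤ 0, where d_{Πk} = |Πk|. Then q* ∘ T̄ = T ∘ q* on the locus where both maps are defined (i.e., on q*⁻¹ of the union of the two half-spaces {⟨e_{Πk}, ·⟩ ≥ 0} and {⟨e_{Πk}, ·⟩ ≤ 0}). -/
open scoped Classical in
/-- The dual embedding `q* : M̄_ℝ ↪ M_ℝ` (realized as the inclusion of `Π`-invariant
functions `m̄ : I → ℝ`) intertwines the tropicalized mutations: with
`T(m) = m + Σ_{k' ∈ Πk} ⟨e_{k'},m⟩·{e_{k'},·}` on the region where all `⟨e_{k'},m⟩ ≥ 0`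
and `T(m) = m` otherwise (in particular on the region where all `⟨e_{k'},m⟩ ≤ 0`), and
`T̄(m̄) = m̄ + ⟨d_{Πk} e_{Πk}, m̄⟩·{e_{Πk},·}` when `⟨e_{Πk},m̄⟩ ≥ 0`, `T̄(m̄) = m̄`
otherwise, where `d_{Πk} = |Πk|`, one has `q* ∘ T̄ = T ∘ q*`. -/
theorem folding_tropical_compatible {I : Type*} [Fintype I] [DecidableEq I]
    (b : I → I → ℤ) (hskew : ∀ i j : I, b i j = -b j i)
    (P : Subgroup (Equiv.Perm I))
    (hfold : ∀ i j : I, ∀ π₁ ∈ P, ∀ π₂ ∈ P, b i j = b (π₁ i) (π₂ j)) (k : I) :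
    let orb : Finset I := Finset.univ.filter fun a => ∃ π ∈ P, π k = a
    let T : (I → ℝ) → (I → ℝ) := fun m =>
      if ∀ k' ∈ orb, 0 ≤ m k' then
        m + ∑ k' ∈ orb, m k' • (fun j => (b k' j : ℝ)) else m
    let Tbar : (I → ℝ) → (I → ℝ) := fun m =>
      if 0 ≤ m k then m + (((orb.card : ℝ)) * m k) • (fun j => (b k j : ℝ)) else m
    ∀ m : I → ℝ, (∀ i : I, ∀ π ∈ P, m (π i) = m i) → Tbar m = T m := by
  intro orb T Tbar m hm
  have hmem : ∀ k' ∈ orb, ∃ π ∈ P, π k = k' := by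
    intro k' hk'
    simpa [orb] using hk'
  have hval : ∀ k' ∈ orb, m k' = m k := by
    intro k' hk'
    obtain ⟨π, hπ, rfl⟩ := hmem k' hk'
    exact hm k π hπ
  have hb : ∀ k' ∈ orb, ∀ j, b k' j = b k j := by
    intro k' hk' j
    obtain ⟨π, hπ, rfl⟩ := hmem k' hk'
    exact (hfold k j π hπ 1 P.one_mem).symm
  have hcond : (∀ k' ∈ orb, 0 ≤ m k') ↔ 0 ≤ m k := by
    constructor
    · intro h
      have hkmem : k ∈ orb := by
        simp only [orb, Finset.mem_filter, Finset.mem_univ, true_and]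
        exact ⟨1, P.one_mem, rfl⟩
      exact h k hkmem
    · intro h k' hk'; rw [hval k' hk']; exact h
  simp only [T, Tbar]
  by_cases h : 0 ≤ m k
  · rw [if_pos h, if_pos (hcond.mpr h)]
    congr 1
    funext j
    simp only [Finset.sum_apply, Pi.smul_apply, smul_eq_mul]
    rw [Finset.sum_congr rfl (fun k' hk' => by rw [hval k' hk', hb k' hk' j]),
      Finset.sum_const, nsmul_eq_mul]
    ring
  · rw [if_neg h, if_neg (fun hc => h (hcond.mp hc))]
end

section
/- Define the birational map δ_α of ℙ² (for a parameter α ∈ ℂ*, α ≠ 1) by δ_α([X₁:X₂:X₃]) = [α⁻¹X₁(X₁+X₂+αX₃) : X₂(X₁+X₂+X₃) : X₃(X₁+αX₂+αX₃)]. Then δ_{α⁻¹} ∘ δ_α = id as a birational map, i.e., applying δ_α and then δ_{α⁻¹} to a generic point [X₁:X₂:X₃] returns homogeneous coordinates that are a common scalar multiple of X₁, X₂, X₃. -/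
/-- The birational map `δ_α` of `ℙ²` given by
`[X₁:X₂:X₃] ↦ [α⁻¹X₁(X₁+X₂+αX₃) : X₂(X₁+X₂+X₃) : X₃(X₁+αX₂+αX₃)]` is a birational
involution: applying the formula a second time with parameter `α⁻¹` returns homogeneous
coordinates which are a common scalar multiple of `X₁, X₂, X₃`. -/
theorem delta_alpha_involution (α X₁ X₂ X₃ : ℂ) (hα0 : α ≠ 0) (hα1 : α ≠ 1) :
    let Y₁ : ℂ := α⁻¹ * X₁ * (X₁ + X₂ + α * X₃)
    let Y₂ : ℂ := X₂ * (X₁ + X₂ + X₃)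
    let Y₃ : ℂ := X₃ * (X₁ + α * X₂ + α * X₃)
    ∃ c : ℂ,
      (α⁻¹)⁻¹ * Y₁ * (Y₁ + Y₂ + α⁻¹ * Y₃) = c * X₁ ∧
      Y₂ * (Y₁ + Y₂ + Y₃) = c * X₂ ∧
      Y₃ * (Y₁ + α⁻¹ * Y₂ + α⁻¹ * Y₃) = c * X₃ := by
  intro Y₁ Y₂ Y₃
  refine ⟨(X₁ + X₂ + X₃) * (Y₁ + Y₂ + Y₃), ?_, ?_, ?_⟩ <;>
    simp only [Y₁, Y₂, Y₃] <;> field_simp <;> ring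
end
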